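/- Let O be the real algebra with basis {e^x : x ∈ F_8} and multiplication e^x e^y = (-1)^{tr(y x^6)} e^{x+y}. For a subset X ⊆ F_8 with |X| = 4 let a = (1/2)Σ_{x∈X} e^x. Then a^2 = a − 1 if 0 ∈ X, and a^2 = −1 if 0 ∉ X. -/

import Mathlib

open scoped Classical
noncomputable section

abbrev F8 := GaloisField 2 3

instance : Fintype F8 := Fintype.ofFinite F8

def tr (x : F8) : F8 := x + x ^ 2 + x ^ 4

/-- The sign `(-1)^{φ(x,y)}` where `φ(x,y) = tr(y x⁶)`. -/
def sgn (x y : F8) : ℝ := if tr (y * x ^ 6) = 0 then 1 else -1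

/-- Multiplication of the twisted group algebra `ℝ_σ[F₈]`, on coordinates:
octonions are functions `F8 → ℝ`, and `e^x e^y = (-1)^{tr(y x⁶)} e^{x+y}`. -/
def omul (a b : F8 → ℝ) : F8 → ℝ := fun z => ∑ x : F8, sgn x (z + x) * a x * b (z + x)

/-- The basis element `e^x`. -/
def e (x : F8) : F8 → ℝ := fun w => if w = x then 1 else 0

/-- Octonion conjugation: `a* = Re(a) - Im(a)`. -/
def conj (a : F8 → ℝ) : F8 → ℝ := fun w => if w = 0 then a 0 else - a w

/-- The norm `N(a) = Σ aₓ²`. -/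
def N (a : F8 → ℝ) : ℝ := ∑ x : F8, (a x) ^ 2

/-!
For `x ≠ 0` one has `(e^x)² = -1`, and `e^x`, `e^y` anticommute for distinct nonzero `x, y`: with
`u = y x⁶ = y / x` the two signs are read off `tr u` and `tr u⁻¹`, whose sum is `1` because
`u, u², u⁴, u⁻¹, u⁻², u⁻⁴` are exactly the elements of `F₈ˣ` other than `1`. Hence every `a`
satisfies `a² = 2 a₀ a - N(a)`, and for `a = ½ Σ_{x∈X} e^x` one has `a₀ ∈ {½, 0}` and
`N(a) = |X| / 4 = 1`.
-/

namespace F8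

lemma card_eq : Fintype.card F8 = 8 := by
  simpa [Nat.card_eq_fintype_card] using GaloisField.card 2 3 (by norm_num)

lemma pow_eight (x : F8) : x ^ 8 = x := by
  simpa [card_eq] using FiniteField.pow_card x

lemma pow_seven {x : F8} (hx : x ≠ 0) : x ^ 7 = 1 := by
  simpa [card_eq] using FiniteField.pow_card_sub_one_eq_one x hx

end F8

lemma tr_sq (x : F8) : tr x ^ 2 = tr x := by
  simp only [tr, add_pow_char, ← pow_mul, Nat.reduceMul, F8.pow_eight]
  ring

lemma tr_eq_zero_or_eq_one (x : F8) : tr x = 0 ∨ tr x = 1 := by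
  have h : tr x * (tr x - 1) = 0 := by linear_combination tr_sq x
  rcases mul_eq_zero.mp h with h | h
  · exact Or.inl h
  · exact Or.inr (sub_eq_zero.mp h)

lemma tr_zero : tr 0 = 0 := by
  simp [tr]

lemma tr_one : tr 1 = 1 := by
  simp only [tr, one_pow, CharTwo.add_self_eq_zero, zero_add]

lemma tr_add_tr_of_mul_eq_one {u v : F8} (huv : u * v = 1) (hu : u ≠ 1) : tr u + tr v = 1 := by
  have h7 : u ^ 7 = 1 := F8.pow_seven (left_ne_zero_of_mul_eq_one huv)
  have hv : v = u ^ 6 := by linear_combination u ^ 6 * huv - v * h7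
  have hgeom : u ^ 6 + u ^ 5 + u ^ 4 + u ^ 3 + u ^ 2 + u + 1 = 0 := by
    have : (u - 1) * (u ^ 6 + u ^ 5 + u ^ 4 + u ^ 3 + u ^ 2 + u + 1) = 0 := by
      linear_combination h7
    exact (mul_eq_zero.mp this).resolve_left (sub_ne_zero.mpr hu)
  rw [tr, tr, hv]
  linear_combination (u ^ 5 + u ^ 3 * (u ^ 14 + u ^ 7 + 1)) * h7 + hgeom + CharTwo.neg_eq (1 : F8)

lemma sgn_zero_left (y : F8) : sgn 0 y = 1 := by
  simp [sgn, tr_zero]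

lemma sgn_zero_right (x : F8) : sgn x 0 = 1 := by
  simp [sgn, tr_zero]

lemma sgn_self (x : F8) : sgn x x = if x = 0 then 1 else -1 := by
  split_ifs with hx
  · rw [hx, sgn_zero_left]
  · rw [sgn, ← pow_succ', F8.pow_seven hx, tr_one, if_neg one_ne_zero]

lemma sgn_add_sgn_swap {x y : F8} (hxy : x ≠ y) :
    sgn x y + sgn y x = if x = 0 ∨ y = 0 then 2 else 0 := by
  by_cases hx : x = 0
  · rw [hx, sgn_zero_left, sgn_zero_right]; norm_num
  by_cases hy : y = 0
  · rw [hy, sgn_zero_left, sgn_zero_right]; norm_num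
  have huv : y * x ^ 6 * (x * y ^ 6) = 1 := by
    linear_combination x ^ 7 * F8.pow_seven hy + F8.pow_seven hx
  have hu : y * x ^ 6 ≠ 1 := fun h =>
    hxy (by linear_combination y * F8.pow_seven hx - x * h)
  have htr := tr_add_tr_of_mul_eq_one huv hu
  rw [if_neg (by tauto), sgn, sgn]
  rcases tr_eq_zero_or_eq_one (y * x ^ 6) with h | h <;> rw [h] at htr ⊢
  · rw [zero_add] at htr; simp [htr]
  · have : tr (x * y ^ 6) = 0 := by linear_combination htr
    simp [this]

lemma omul_self_apply_zero (a : F8 → ℝ) : omul a a 0 = 2 * a 0 ^ 2 - N a :=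
  calc omul a a 0 = ∑ x, ((if x = 0 then 2 * a x ^ 2 else 0) - a x ^ 2) := by
        refine Finset.sum_congr rfl fun x _ => ?_
        rw [zero_add, sgn_self]
        split_ifs <;> ring
    _ = 2 * a 0 ^ 2 - N a := by
        rw [Finset.sum_sub_distrib, Finset.sum_ite_eq' Finset.univ (0 : F8),
          if_pos (Finset.mem_univ _), N]

lemma omul_self_apply_of_ne_zero (a : F8 → ℝ) {z : F8} (hz : z ≠ 0) :
    omul a a z = 2 * a 0 * a z := by
  have hswap : omul a a z = ∑ x, sgn (z + x) x * a (z + x) * a x := by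
    rw [omul, ← Equiv.sum_comp (Equiv.addLeft z)]
    simp only [Equiv.coe_addLeft, CharTwo.add_cancel_left]
  have hpaired :
      2 * omul a a z = ∑ x, (if x = 0 ∨ z + x = 0 then 2 else 0) * a x * a (z + x) := by
    rw [two_mul]
    nth_rewrite 2 [hswap]
    rw [omul, ← Finset.sum_add_distrib]
    refine Finset.sum_congr rfl fun x _ => ?_
    have hne : x ≠ z + x := fun h => hz (by simpa using h)
    rw [← sgn_add_sgn_swap hne]
    ring
  rw [Fintype.sum_eq_add 0 z hz.symm
    (fun x hx => by simp [hx.1, CharTwo.add_eq_zero, Ne.symm hx.2])] at hpaired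
  simp only [add_zero, true_or, ↓reduceIte, CharTwo.add_self_eq_zero, or_true] at hpaired
  linarith

lemma omul_self (a : F8 → ℝ) : omul a a = (2 * a 0) • a - N a • e 0 := by
  funext z
  by_cases hz : z = 0
  · subst hz
    simp only [omul_self_apply_zero, Pi.sub_apply, Pi.smul_apply, smul_eq_mul, e, ↓reduceIte,
      mul_one]
    ring
  · simp [omul_self_apply_of_ne_zero a hz, e, hz]

lemma N_ite_mem (X : Finset F8) (c : ℝ) :
    N (fun w => if w ∈ X then c else 0) = X.card * c ^ 2 := by
  simp [N, ite_pow, Finset.sum_ite_mem]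

theorem half_sum_sq (X : Finset F8) (hX : X.card = 4) :
    let a : F8 → ℝ := fun w => if w ∈ X then 1 / 2 else 0
    ((0 : F8) ∈ X → omul a a = a - e 0) ∧ ((0 : F8) ∉ X → omul a a = - e 0) := by
  intro a
  have hN : N a = 1 := by
    rw [N_ite_mem, hX]
    norm_num
  refine ⟨fun h0 => ?_, fun h0 => ?_⟩ <;> rw [omul_self, hN] <;> simp [a, h0]
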